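/- arXiv:2006.03404 — 3 statements merged into one kernel-verified Lean document; each statement's English description precedes it below -/
import Mathlib

section
/- Let λ1, λ2 > 0 with λ = λ1 + λ2, and let S be any nonnegative random variable with M(λ) = E[S·exp(−λ·S)]. Then −2·λ1·λ2·M(λ) / (λ · sqrt((1 − 2·λ1·M(λ))·(1 − 2·λ2·M(λ)))) ≥ −2·λ1·λ2 / (λ · sqrt((e·λ − 2·λ1)·(e·λ − 2·λ2))); that is, among all service-time distributions with the two sources sharing a common distribution and λ fixed, the correlation coefficient of the AoIs is minimized when the service times are deterministic and equal to 1/λ. -/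
/-!
The expectation `M = E[S·exp(−λS)]` only enters the correlation coefficient through
`M ↦ −2λ₁λ₂M / (λ·√((1 − 2λ₁M)(1 − 2λ₂M)))`, which is antitone as long as both factors
under the root stay positive. Since `x·exp(−λx) ≤ 1/(eλ)` for every `x` (with
equality at `x = 1/λ`), we have `0 ≤ M ≤ 1/(eλ)`, and `1/(eλ)` still lies in the domain
of monotonicity because `e > 2`; its value there is the deterministic one.
-/

open MeasureTheory

/-- The AoI correlation coefficient `CC_S(l1, l2)` as a function of `M = M(l1 + l2)`. -/
noncomputable def aoiCC (l1 l2 M : ℝ) : ℝ :=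
  -(2 * l1 * l2 * M) / ((l1 + l2) * Real.sqrt ((1 - 2 * l1 * M) * (1 - 2 * l2 * M)))

theorem Real.mul_exp_neg_mul_le_inv {l : ℝ} (hl : 0 < l) (x : ℝ) :
    x * Real.exp (-l * x) ≤ (Real.exp 1 * l)⁻¹ := by
  have hlx : l * x ≤ Real.exp (l * x - 1) := by
    linarith [Real.add_one_le_exp (l * x - 1)]
  calc x * Real.exp (-l * x) = l * x * Real.exp (-l * x) / l := by field_simp
    _ ≤ Real.exp (l * x - 1) * Real.exp (-l * x) / l := by gcongr
    _ = (Real.exp 1 * l)⁻¹ := by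
      rw [← Real.exp_add, show l * x - 1 + -l * x = -1 by ring, Real.exp_neg, mul_inv]
      ring

theorem integral_mul_exp_neg_mul_le_inv {Ω : Type*} [MeasurableSpace Ω] (P : Measure Ω)
    [IsProbabilityMeasure P] {S : Ω → ℝ} (hS : ∀ ω, 0 ≤ S ω) {l : ℝ} (hl : 0 < l) :
    ∫ ω, S ω * Real.exp (-l * S ω) ∂P ≤ (Real.exp 1 * l)⁻¹ := by
  calc ∫ ω, S ω * Real.exp (-l * S ω) ∂P ≤ ∫ _, (Real.exp 1 * l)⁻¹ ∂P :=
        integral_mono_of_nonneg (.of_forall fun ω => by positivity [hS ω]) (integrable_const _)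
          (.of_forall fun ω => Real.mul_exp_neg_mul_le_inv hl (S ω))
    _ = (Real.exp 1 * l)⁻¹ := by simp

theorem aoiCC_le_aoiCC_of_le {l1 l2 M M' : ℝ} (hl1 : 0 ≤ l1) (hl2 : 0 ≤ l2) (hM : 0 ≤ M)
    (hMM' : M ≤ M') (h1 : 2 * l1 * M' < 1) (h2 : 2 * l2 * M' < 1) :
    aoiCC l1 l2 M' ≤ aoiCC l1 l2 M := by
  have h1M : 0 < 1 - 2 * l1 * M := by nlinarith
  have h2M : 0 < 1 - 2 * l2 * M := by nlinarith
  -- `M(1 − 2lM') ≤ M'(1 − 2lM)` reduces to `M ≤ M'`.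
  have hprod : M ^ 2 * ((1 - 2 * l1 * M') * (1 - 2 * l2 * M')) ≤
      M' ^ 2 * ((1 - 2 * l1 * M) * (1 - 2 * l2 * M)) := by
    calc M ^ 2 * ((1 - 2 * l1 * M') * (1 - 2 * l2 * M'))
        = (M * (1 - 2 * l1 * M')) * (M * (1 - 2 * l2 * M')) := by ring
      _ ≤ (M' * (1 - 2 * l1 * M)) * (M' * (1 - 2 * l2 * M)) := by
        gcongr <;> nlinarith
      _ = M' ^ 2 * ((1 - 2 * l1 * M) * (1 - 2 * l2 * M)) := by ring
  have hsqrt := Real.sqrt_le_sqrt hprod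
  rw [Real.sqrt_mul (sq_nonneg _), Real.sqrt_mul (sq_nonneg _), Real.sqrt_sq hM,
    Real.sqrt_sq (hM.trans hMM')] at hsqrt
  rcases (add_nonneg hl1 hl2).eq_or_lt with hl | hl
  · simp [aoiCC, ← hl]
  unfold aoiCC
  rw [neg_div, neg_div, neg_le_neg_iff, div_le_div_iff₀ (by positivity) (by positivity)]
  calc 2 * l1 * l2 * M * ((l1 + l2) * Real.sqrt ((1 - 2 * l1 * M') * (1 - 2 * l2 * M')))
      = 2 * l1 * l2 * (l1 + l2) * (M * Real.sqrt ((1 - 2 * l1 * M') * (1 - 2 * l2 * M'))) := by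
        ring
    _ ≤ 2 * l1 * l2 * (l1 + l2) * (M' * Real.sqrt ((1 - 2 * l1 * M) * (1 - 2 * l2 * M))) := by
        gcongr
    _ = 2 * l1 * l2 * M' * ((l1 + l2) * Real.sqrt ((1 - 2 * l1 * M) * (1 - 2 * l2 * M))) := by
        ring

theorem aoiCC_inv_exp_one_mul {l1 l2 : ℝ} (hl : 0 < l1 + l2) :
    aoiCC l1 l2 (Real.exp 1 * (l1 + l2))⁻¹ =
      -(2 * l1 * l2) / ((l1 + l2) *
        Real.sqrt ((Real.exp 1 * (l1 + l2) - 2 * l1) * (Real.exp 1 * (l1 + l2) - 2 * l2))) := by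
  have hc : 0 < Real.exp 1 * (l1 + l2) := by positivity
  have hfactor :
      (1 - 2 * l1 * (Real.exp 1 * (l1 + l2))⁻¹) * (1 - 2 * l2 * (Real.exp 1 * (l1 + l2))⁻¹) =
        ((Real.exp 1 * (l1 + l2))⁻¹) ^ 2 *
          ((Real.exp 1 * (l1 + l2) - 2 * l1) * (Real.exp 1 * (l1 + l2) - 2 * l2)) := by
    field_simp
  rw [aoiCC, hfactor, Real.sqrt_mul (by positivity), Real.sqrt_sq (by positivity)]
  field_simp

theorem aoiCC_common_service_ge_deterministic_general {Ω : Type*} [MeasurableSpace Ω]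
    (P : Measure Ω) [IsProbabilityMeasure P] (S : Ω → ℝ)
    (hSnn : ∀ ω, 0 ≤ S ω) (lam1 lam2 : ℝ) (hlam1 : 0 < lam1) (hlam2 : 0 < lam2) :
    -(2 * lam1 * lam2) / ((lam1 + lam2) *
        Real.sqrt ((Real.exp 1 * (lam1 + lam2) - 2 * lam1) *
          (Real.exp 1 * (lam1 + lam2) - 2 * lam2))) ≤
      -(2 * lam1 * lam2 * ∫ ω, S ω * Real.exp (-(lam1 + lam2) * S ω) ∂P) /
        ((lam1 + lam2) *
          Real.sqrt ((1 - 2 * lam1 * ∫ ω, S ω * Real.exp (-(lam1 + lam2) * S ω) ∂P) *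
            (1 - 2 * lam2 * ∫ ω, S ω * Real.exp (-(lam1 + lam2) * S ω) ∂P))) := by
  have hlam : 0 < lam1 + lam2 := add_pos hlam1 hlam2
  have he : 2 < Real.exp 1 := lt_trans (by norm_num) Real.exp_one_gt_d9
  have hdet : ∀ l ≤ lam1 + lam2, 2 * l * (Real.exp 1 * (lam1 + lam2))⁻¹ < 1 :=
    fun l hle => by
      rw [← div_eq_mul_inv, div_lt_one (by positivity)]
      nlinarith
  rw [← aoiCC_inv_exp_one_mul hlam]
  exact aoiCC_le_aoiCC_of_le hlam1.le hlam2.le (integral_nonneg fun ω => by positivity [hSnn ω])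
    (integral_mul_exp_neg_mul_le_inv P hSnn hlam) (hdet lam1 (by linarith))
    (hdet lam2 (by linarith))

/-- With a common service-time distribution for both sources and `λ = λ1 + λ2` fixed,
the AoI correlation coefficient is minimized by the deterministic service time `1/λ`:
`−2·λ1·λ2·M(λ)/(λ·sqrt((1−2·λ1·M(λ))·(1−2·λ2·M(λ))))
  ≥ −2·λ1·λ2/(λ·sqrt((e·λ−2·λ1)·(e·λ−2·λ2)))`,
where `M(λ) = E[S·exp(−λ·S)]`. -/
theorem aoiCC_common_service_ge_deterministic {Ω : Type*} [MeasurableSpace Ω]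
    (P : Measure Ω) [IsProbabilityMeasure P] (S : Ω → ℝ) (hSmeas : Measurable S)
    (hSnn : ∀ ω, 0 ≤ S ω) (lam1 lam2 : ℝ) (hlam1 : 0 < lam1) (hlam2 : 0 < lam2) :
    -(2 * lam1 * lam2) / ((lam1 + lam2) *
        Real.sqrt ((Real.exp 1 * (lam1 + lam2) - 2 * lam1) *
          (Real.exp 1 * (lam1 + lam2) - 2 * lam2))) ≤
      -(2 * lam1 * lam2 * ∫ ω, S ω * Real.exp (-(lam1 + lam2) * S ω) ∂P) /
        ((lam1 + lam2) *
          Real.sqrt ((1 - 2 * lam1 * ∫ ω, S ω * Real.exp (-(lam1 + lam2) * S ω) ∂P) *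
            (1 - 2 * lam2 * ∫ ω, S ω * Real.exp (-(lam1 + lam2) * S ω) ∂P))) :=
  aoiCC_common_service_ge_deterministic_general P S hSnn lam1 lam2 hlam1 hlam2
end

section
/- Fix α > 0 and λ1, λ2 > 0 with λ = λ1 + λ2, and write c = (1 + 1/α)^{α+1}. Then −2·λ1·λ2 / (λ · sqrt((c·λ − 2·λ1)·(c·λ − 2·λ2))) ≥ −1 / (2·(c − 1)), with equality if and only if λ1 = λ2 = λ/2. (Here c·λ − 2·λ_k > 0 since (1 + 1/α)^{α+1} > 2 for all α > 0.) -/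
open Real

/-! With `s = λ₁ + λ₂` and `D = (c s - 2 λ₁)(c s - 2 λ₂)`, the bound says `4 λ₁ λ₂ (c - 1) ≤ s √D`.
Both sides are positive, and
`s² D - (4 λ₁ λ₂ (c - 1))² = (λ₁ - λ₂)² (c (c - 2) (8 λ₁ λ₂ + (λ₁ - λ₂)²) + 4 λ₁ λ₂)`,
whose second factor is positive because `c > 2` by Bernoulli's inequality. -/

theorem two_lt_one_add_inv_rpow_add_one {α : ℝ} (hα : 0 < α) :
    2 < (1 + 1 / α) ^ (α + 1) := by
  have hinv : 0 < 1 / α := by positivity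
  have bernoulli := one_add_mul_self_le_rpow_one_add (by linarith : (-1 : ℝ) ≤ 1 / α)
    (by linarith : (1 : ℝ) ≤ α + 1)
  have hmul : (α + 1) * (1 / α) = 1 + 1 / α := by field_simp
  rw [hmul] at bernoulli
  linarith

theorem sq_mul_sub_sq_eq (a b c : ℝ) :
    (a + b) ^ 2 * ((c * (a + b) - 2 * a) * (c * (a + b) - 2 * b)) - (4 * a * b * (c - 1)) ^ 2 =
      (a - b) ^ 2 * (c * (c - 2) * (8 * a * b + (a - b) ^ 2) + 4 * a * b) := by
  ring

section

variable {a b c : ℝ} (hc : 2 ≤ c) (ha : 0 < a) (hb : 0 < b)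
include hc ha hb

theorem sq_le_sq_mul_and_eq_iff :
    (4 * a * b * (c - 1)) ^ 2 ≤ (a + b) ^ 2 * ((c * (a + b) - 2 * a) * (c * (a + b) - 2 * b)) ∧
      ((4 * a * b * (c - 1)) ^ 2 =
          (a + b) ^ 2 * ((c * (a + b) - 2 * a) * (c * (a + b) - 2 * b)) ↔ a = b) := by
  have hfactor : 0 < c * (c - 2) * (8 * a * b + (a - b) ^ 2) + 4 * a * b := by
    have : 0 ≤ c * (c - 2) * (8 * a * b + (a - b) ^ 2) :=
      mul_nonneg (mul_nonneg (by linarith) (by linarith)) (by positivity)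
    nlinarith [mul_pos ha hb]
  have hdiff := sq_mul_sub_sq_eq a b c
  refine ⟨by nlinarith [mul_nonneg (sq_nonneg (a - b)) hfactor.le], ⟨fun h => ?_, fun h => ?_⟩⟩
  · have hzero : (a - b) ^ 2 * (c * (c - 2) * (8 * a * b + (a - b) ^ 2) + 4 * a * b) = 0 := by
      linarith
    have := pow_eq_zero_iff two_ne_zero |>.mp <| (mul_eq_zero.mp hzero).resolve_right hfactor.ne'
    linarith
  · subst h
    ring

theorem four_mul_mul_sub_one_le_and_eq_iff :
    4 * a * b * (c - 1) ≤ (a + b) * √((c * (a + b) - 2 * a) * (c * (a + b) - 2 * b)) ∧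
      (4 * a * b * (c - 1) = (a + b) * √((c * (a + b) - 2 * a) * (c * (a + b) - 2 * b)) ↔
        a = b) := by
  have hlhs : 0 ≤ 4 * a * b * (c - 1) := by
    have : 0 ≤ c - 1 := by linarith
    positivity
  have hD : 0 ≤ (c * (a + b) - 2 * a) * (c * (a + b) - 2 * b) :=
    mul_nonneg (by nlinarith) (by nlinarith)
  have hrhs : (a + b) * √((c * (a + b) - 2 * a) * (c * (a + b) - 2 * b)) =
      √((a + b) ^ 2 * ((c * (a + b) - 2 * a) * (c * (a + b) - 2 * b))) := by
    rw [sqrt_mul (sq_nonneg _), sqrt_sq (by linarith)]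
  rw [hrhs, le_sqrt hlhs (mul_nonneg (sq_nonneg _) hD), eq_comm,
    sqrt_eq_iff_eq_sq (mul_nonneg (sq_nonneg _) hD) hlhs, eq_comm (a := _ * _)]
  exact sq_le_sq_mul_and_eq_iff hc ha hb

theorem neg_div_sqrt_ge_and_eq_iff :
    -(1 / (2 * (c - 1))) ≤
        -(2 * a * b) / ((a + b) * √((c * (a + b) - 2 * a) * (c * (a + b) - 2 * b))) ∧
      (-(2 * a * b) / ((a + b) * √((c * (a + b) - 2 * a) * (c * (a + b) - 2 * b))) =
          -(1 / (2 * (c - 1))) ↔ a = b) := by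
  obtain ⟨hle, heq⟩ := four_mul_mul_sub_one_le_and_eq_iff hc ha hb
  have hD : 0 < (c * (a + b) - 2 * a) * (c * (a + b) - 2 * b) :=
    mul_pos (by nlinarith) (by nlinarith)
  have hden : 0 < (a + b) * √((c * (a + b) - 2 * a) * (c * (a + b) - 2 * b)) :=
    mul_pos (by linarith) (sqrt_pos.mpr hD)
  have hc1 : 0 < 2 * (c - 1) := by linarith
  rw [neg_div, neg_le_neg_iff, neg_inj, div_le_div_iff₀ hden hc1,
    div_eq_div_iff hden.ne' hc1.ne']
  constructor
  · linarith
  · rw [← heq]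
    constructor <;> intro h <;> linarith

end

/-- With `c = (1 + 1/α)^(α+1)` and `λ = λ1 + λ2`,
`−2·λ1·λ2/(λ·sqrt((c·λ − 2·λ1)·(c·λ − 2·λ2))) ≥ −1/(2·(c − 1))`,
with equality if and only if `λ1 = λ2 = λ/2`. -/
theorem gamma_cc_lower_bound (α lam1 lam2 : ℝ) (hα : 0 < α)
    (hlam1 : 0 < lam1) (hlam2 : 0 < lam2) :
    (-(1 / (2 * ((1 + 1 / α) ^ (α + 1) - 1))) ≤
      -(2 * lam1 * lam2) / ((lam1 + lam2) *
        Real.sqrt (((1 + 1 / α) ^ (α + 1) * (lam1 + lam2) - 2 * lam1) *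
          ((1 + 1 / α) ^ (α + 1) * (lam1 + lam2) - 2 * lam2)))) ∧
    (-(2 * lam1 * lam2) / ((lam1 + lam2) *
        Real.sqrt (((1 + 1 / α) ^ (α + 1) * (lam1 + lam2) - 2 * lam1) *
          ((1 + 1 / α) ^ (α + 1) * (lam1 + lam2) - 2 * lam2))) =
        -(1 / (2 * ((1 + 1 / α) ^ (α + 1) - 1))) ↔
      lam1 = lam2 ∧ lam1 = (lam1 + lam2) / 2) := by
  obtain ⟨hle, heq⟩ :=
    neg_div_sqrt_ge_and_eq_iff (two_lt_one_add_inv_rpow_add_one hα).le hlam1 hlam2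
  refine ⟨hle, heq.trans ⟨fun h => ⟨h, by rw [h]; ring⟩, And.left⟩⟩
end

section
/- Let K ∈ ℕ and let (τ_n, c_n, S_n), n ≥ 0, be an i.i.d. sequence of triples where each τ_n is exponentially distributed with rate λ = λ_1 + ⋯ + λ_K > 0 and independent of the pair (c_n, S_n); the mark c_n takes value k ∈ {1,…,K} with probability λ_k/λ, and conditionally on c_n = k the nonnegative service time S_n has Laplace transform L_{S,k}(s) = E[exp(−s·S_n) | c_n = k]. Let M = inf{n ≥ 0 : S_n ≤ τ_n} and B = Σ_{i=0}^{M−1} τ_i + S_M. Then for every s ≥ 0 and k ∈ {1,…,K}, E[exp(−s·B)·1{c_M = k}] = (λ_k/λ)·L_{S,k}(s+λ)·(s + λ) / (s + λ·L_S(s+λ)), where L_S(u) = (1/λ)·Σ_{j=1}^K λ_j·L_{S,j}(u). -/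
/-!
Call cycle `n` the triple `(τ_n, c_n, S_n)`: the packet `(c_n, S_n)` enters service and is either
delivered (`S_n ≤ τ_n`, which ends the busy period) or pushed out by the arrival at `τ_n`. On
`{M = n}`, `e^{-sB} 1{c_M = k}` is the product of the pushed-out weights `1{τ_i < S_i} e^{-sτ_i}`,
`i < n`, and the delivered weight `1{S_n ≤ τ_n, c_n = k} e^{-sS_n}`; `M` is a.s. finite because
`P(S ≤ τ) = E e^{-λS} > 0`. Summing over `n`, independence of the cycles gives the geometric
series `Σ_n r^n q = q / (1 - r)`. Integrating out the exponential clock `τ` first yields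
`r = λ/(s+λ) · (1 - E e^{-(s+λ)S})` and `q = E[e^{-(s+λ)S}; c = k]`, and splitting
`E e^{-(s+λ)S}` by source gives `λ L_S(s+λ)`.
-/

open MeasureTheory ProbabilityTheory Filter Set Real Finset
open scoped ENNReal

theorem integral_eq_sum_setIntegral_fiber {Ω κ E : Type*} [MeasurableSpace Ω] [Fintype κ]
    [MeasurableSpace κ] [MeasurableSingletonClass κ] [NormedAddCommGroup E] [NormedSpace ℝ E]
    {P : Measure Ω} {c : Ω → κ} (hc : Measurable c) {f : Ω → E} (hf : Integrable f P) :
    ∫ ω, f ω ∂P = ∑ j, ∫ ω in {ω | c ω = j}, f ω ∂P := by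
  rw [← integral_iUnion_fintype (s := fun j => {ω | c ω = j})
    (fun j => hc (measurableSet_singleton j)) (pairwise_disjoint_fiber c) fun _ => hf.integrableOn,
    iUnion_eq_univ_iff.2 fun ω => ⟨c ω, rfl⟩, setIntegral_univ]

section Exponential

theorem lintegral_ite_lt_exp_expMeasure {l a x : ℝ} (hl : 0 < l) (hal : a + l ≠ 0)
    (hx : 0 ≤ x) :
    ∫⁻ t, (if t < x then ENNReal.ofReal (exp (-a * t)) else 0) ∂expMeasure l =
      ENNReal.ofReal (l / (a + l) * (1 - exp (-(a + l) * x))) := by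
  have hpdf : ∀ t, exponentialPDF l t * (if t < x then ENNReal.ofReal (exp (-a * t)) else 0) =
      (Ico 0 x).indicator (fun t => ENNReal.ofReal (l * exp (-(a + l) * t))) t := by
    intro t
    by_cases h0 : 0 ≤ t
    · by_cases hxt : t < x
      · simp only [indicator, Set.mem_Ico, h0, hxt, and_self, if_true,
          exponentialPDF_of_nonneg h0]
        rw [← ENNReal.ofReal_mul (by positivity), mul_assoc, ← exp_add]
        ring_nf
      · simp [indicator, hxt]
    · simp [indicator, h0, exponentialPDF_of_neg (not_le.mp h0)]
  have hcont : Continuous fun t => l * exp (-(a + l) * t) := by fun_prop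
  rw [show expMeasure l = volume.withDensity (exponentialPDF l) from rfl,
    lintegral_withDensity_eq_lintegral_mul _
      (show Measurable (exponentialPDF l) from (measurable_exponentialPDFReal l).ennreal_ofReal)
      (Measurable.ite measurableSet_Iio (by fun_prop) measurable_const)]
  simp only [Pi.mul_apply, hpdf]
  rw [lintegral_indicator measurableSet_Ico, ← ofReal_integral_eq_lintegral_ofReal
    (hcont.integrableOn_Icc.mono_set Ico_subset_Icc_self)
    (ae_of_all _ fun t => by positivity), integral_Ico_eq_integral_Ioc,
    ← intervalIntegral.integral_of_le hx, intervalIntegral.integral_const_mul,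
    intervalIntegral.integral_comp_mul_left (fun t => exp t) (neg_ne_zero.mpr hal), integral_exp,
    mul_zero, exp_zero, smul_eq_mul]
  congr 1
  field_simp
  ring

theorem expMeasure_Ici {l x : ℝ} (hl : 0 < l) (hx : 0 ≤ x) :
    expMeasure l (Ici x) = ENNReal.ofReal (exp (-l * x)) := by
  have := isProbabilityMeasure_expMeasure hl
  have hIio : expMeasure l (Iio x) = ENNReal.ofReal (1 - exp (-l * x)) := by
    have h := lintegral_ite_lt_exp_expMeasure hl (a := 0) (by simpa using hl.ne') hx
    simp only [neg_zero, zero_mul, exp_zero, ENNReal.ofReal_one, zero_add, div_self hl.ne',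
      one_mul] at h
    rw [← h, ← lintegral_indicator_one measurableSet_Iio]
    simp [indicator]
  have hle : exp (-l * x) ≤ 1 := exp_le_one_iff.2 (by nlinarith)
  rw [← compl_Iio, prob_compl_eq_one_sub measurableSet_Iio, hIio, ← ENNReal.ofReal_one,
    ← ENNReal.ofReal_sub _ (sub_nonneg.2 hle), sub_sub_cancel]

theorem hasLaw_expMeasure_of_measureReal_lt {Ω : Type*} [MeasurableSpace Ω] {P : Measure Ω}
    [IsProbabilityMeasure P] {X : Ω → ℝ} (hX : Measurable X) {l : ℝ} (hl : 0 < l)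
    (h : ∀ t, 0 ≤ t → P.real {ω | t < X ω} = exp (-l * t)) : HasLaw X (expMeasure l) P where
  aemeasurable := hX.aemeasurable
  map_eq := by
    have := isProbabilityMeasure_expMeasure hl
    have := Measure.isProbabilityMeasure_map (μ := P) hX.aemeasurable
    have hIoi : ∀ t, 0 ≤ t → (P.map X).real (Ioi t) = exp (-l * t) := fun t ht => by
      rw [map_measureReal_apply hX measurableSet_Ioi]; exact h t ht
    have hIic : ∀ x, (P.map X).real (Iic x) = 1 - (P.map X).real (Ioi x) := fun x => by
      rw [← compl_Ioi, probReal_compl_eq_one_sub measurableSet_Ioi]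
    refine Measure.eq_of_cdf _ _ (StieltjesFunction.ext fun x => ?_)
    rw [cdf_eq_real, cdf_expMeasure_eq hl, hIic]
    split_ifs with hx
    · rw [hIoi x hx, neg_mul]
    · refine le_antisymm ?_ (by rw [← hIic]; exact measureReal_nonneg)
      calc 1 - (P.map X).real (Ioi x) ≤ 1 - (P.map X).real (Ioi 0) := by
            gcongr
            exacts [measure_ne_top _ _, (not_le.mp hx).le]
        _ = 0 := by rw [hIoi 0 le_rfl]; simp

end Exponential

section ExponentialClock

variable {Ω α β : Type*} [MeasurableSpace Ω] [MeasurableSpace α] [MeasurableSpace β]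
  {P : Measure Ω}

theorem ProbabilityTheory.IndepFun.lintegral_comp_prodMk [IsFiniteMeasure P] {μ : Measure α}
    [SFinite μ] {X : Ω → α} {V : Ω → β} (hXV : X ⟂ᵢ[P] V) (hX : HasLaw X μ P)
    (hV : AEMeasurable V P) {f : α × β → ℝ≥0∞} (hf : Measurable f) :
    ∫⁻ ω, f (X ω, V ω) ∂P = ∫⁻ ω, ∫⁻ x, f (x, V ω) ∂μ ∂P := by
  have hVlaw : HasLaw V (P.map V) P := ⟨hV, rfl⟩
  rw [(hXV.hasLaw_prod hX hVlaw).lintegral_comp hf.aemeasurable, lintegral_prod_symm' f hf,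
    hVlaw.lintegral_comp hf.lintegral_prod_left'.aemeasurable]

theorem integrable_exp_neg_mul [IsFiniteMeasure P] {Y : Ω → ℝ} (hY : Measurable Y)
    (hY0 : ∀ ω, 0 ≤ Y ω) {a : ℝ} (ha : 0 ≤ a) : Integrable (fun ω => exp (-a * Y ω)) P :=
  .mono' (integrable_const 1) (by fun_prop) <| ae_of_all _ fun ω => by
    rw [norm_of_nonneg (exp_nonneg _), exp_le_one_iff]; nlinarith [hY0 ω]

variable [IsProbabilityMeasure P] {l : ℝ} {X : Ω → ℝ}

theorem lintegral_ite_lt_exp_of_indepFun (hl : 0 < l) (hX : HasLaw X (expMeasure l) P)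
    {Y : Ω → ℝ} (hY : Measurable Y) (hY0 : ∀ ω, 0 ≤ Y ω) (hXY : X ⟂ᵢ[P] Y) {s : ℝ}
    (hsl : 0 < s + l) :
    ∫⁻ ω, (if X ω < Y ω then ENNReal.ofReal (exp (-s * X ω)) else 0) ∂P =
      ENNReal.ofReal (l / (s + l) * (1 - ∫ ω, exp (-(s + l) * Y ω) ∂P)) := by
  have := isProbabilityMeasure_expMeasure hl
  rw [hXY.lintegral_comp_prodMk hX hY.aemeasurable (f := fun p =>
      if p.1 < p.2 then ENNReal.ofReal (exp (-s * p.1)) else 0)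
      (Measurable.ite (measurableSet_lt measurable_fst measurable_snd) (by fun_prop)
        measurable_const)]
  simp only [lintegral_ite_lt_exp_expMeasure hl hsl.ne' (hY0 _)]
  have hint := integrable_exp_neg_mul (P := P) hY hY0 hsl.le
  have hint' : Integrable (fun ω => l / (s + l) * (1 - exp (-(s + l) * Y ω))) P :=
    ((integrable_const 1).sub hint).const_mul _
  rw [← ofReal_integral_eq_lintegral_ofReal hint' (ae_of_all _ fun ω => ?_), integral_const_mul,
    integral_sub (integrable_const 1) hint, integral_const, probReal_univ, one_smul]
  have : exp (-(s + l) * Y ω) ≤ 1 := exp_le_one_iff.2 (by nlinarith [hY0 ω])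
  exact mul_nonneg (div_nonneg hl.le hsl.le) (sub_nonneg.2 this)

theorem lintegral_ite_le_of_indepFun (hl : 0 < l) (hX : HasLaw X (expMeasure l) P)
    {V : Ω → β} (hV : Measurable V) (hXV : X ⟂ᵢ[P] V) {φ : β → ℝ} (hφ : Measurable φ)
    (hφ0 : ∀ ω, 0 ≤ φ (V ω)) {w : β → ℝ≥0∞} (hw : Measurable w) :
    ∫⁻ ω, (if φ (V ω) ≤ X ω then w (V ω) else 0) ∂P =
      ∫⁻ ω, w (V ω) * ENNReal.ofReal (exp (-l * φ (V ω))) ∂P := by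
  have := isProbabilityMeasure_expMeasure hl
  rw [hXV.lintegral_comp_prodMk hX hV.aemeasurable (f := fun p =>
      if φ p.2 ≤ p.1 then w p.2 else 0)
      (Measurable.ite (measurableSet_le (hφ.comp measurable_snd) measurable_fst)
        (hw.comp measurable_snd) measurable_const)]
  refine lintegral_congr fun ω => ?_
  rw [← expMeasure_Ici hl (hφ0 ω), ← lintegral_indicator_const measurableSet_Ici]
  simp [indicator]

theorem measure_le_ne_zero_of_indepFun (hl : 0 < l) (hX : HasLaw X (expMeasure l) P)
    {Y : Ω → ℝ} (hY : Measurable Y) (hY0 : ∀ ω, 0 ≤ Y ω) (hXY : X ⟂ᵢ[P] Y) :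
    P {ω | Y ω ≤ X ω} ≠ 0 := by
  have hint := integrable_exp_neg_mul (P := P) hY hY0 hl.le
  have h := lintegral_ite_le_of_indepFun hl hX hY hXY measurable_id hY0 (w := fun _ => 1)
    measurable_const
  simp only [id, one_mul] at h
  rw [← ofReal_integral_eq_lintegral_ofReal hint (ae_of_all _ fun _ => (exp_pos _).le)] at h
  rw [← lintegral_indicator_one₀ (nullMeasurableSet_le hY.aemeasurable hX.aemeasurable)]
  convert (ENNReal.ofReal_pos.2 (integral_exp_pos hint)).ne' using 1
  rw [← h]
  simp [indicator]

end ExponentialClock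

section FirstSuccess

-- When `p` never holds, `sInf ∅ = 0` and both sides vanish, since then `b 0 = 0`.
theorem tsum_prod_range_mul_eq_sInf {R : Type*} [CommSemiring R] [TopologicalSpace R]
    {p : ℕ → Prop} {a b : ℕ → R} (ha : ∀ n, p n → a n = 0) (hb : ∀ n, ¬ p n → b n = 0) :
    ∑' n, (∏ i ∈ range n, a i) * b n =
      (∏ i ∈ range (sInf {n | p n}), a i) * b (sInf {n | p n}) := by
  refine tsum_eq_single _ fun n hn => ?_
  by_cases hpn : p n
  · have hlt : sInf {n | p n} < n := (Nat.sInf_le hpn).lt_of_ne' hn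
    rw [prod_eq_zero (mem_range.2 hlt) (ha _ (Nat.sInf_mem ⟨n, hpn⟩)), zero_mul]
  · rw [hb n hpn, mul_zero]

variable {Ω α : Type*} [MeasurableSpace Ω] [MeasurableSpace α]

theorem measurable_sInf_setOf {p : ℕ → Ω → Prop} (hp : ∀ n, MeasurableSet {ω | p n ω}) :
    Measurable fun ω => sInf {n | p n ω} := by
  refine measurable_to_countable' fun m => ?_
  have : (fun ω => sInf {n | p n ω}) ⁻¹' {m} =
      {ω | p m ω ∧ ∀ i < m, ¬ p i ω} ∪ {ω | m = 0 ∧ ∀ i, ¬ p i ω} := by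
    ext ω
    simp only [Set.mem_preimage, Set.mem_singleton_iff, Set.mem_union]
    constructor
    · rintro rfl
      by_cases hne : {n | p n ω}.Nonempty
      · exact .inl ⟨Nat.sInf_mem hne, fun i hi => Nat.notMem_of_lt_sInf hi⟩
      · refine .inr ⟨?_, fun i hi => hne ⟨i, hi⟩⟩
        rw [not_nonempty_iff_eq_empty.1 hne, Nat.sInf_empty]
    · rintro (⟨hm, hlt⟩ | ⟨rfl, hnone⟩)
      · exact IsLeast.csInf_eq ⟨hm, fun n hn => not_lt.1 fun h => hlt n h hn⟩
      · rw [Nat.sInf_eq_zero]; exact .inr (eq_empty_of_forall_notMem hnone)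
  rw [this]
  simp only [ofPred_and, ofPred_forall, ← compl_ofPred]
  exact .union ((hp m).inter (.iInter fun i => .iInter fun _ => (hp i).compl))
    ((MeasurableSet.const _).inter (.iInter fun i => (hp i).compl))

theorem Measurable.apply_of_measurable_index {X : ℕ → Ω → α} (hX : ∀ n, Measurable (X n))
    {M : Ω → ℕ} (hM : Measurable M) : Measurable fun ω => X (M ω) ω :=
  (measurable_from_prod_countable_left (f := fun p : Ω × ℕ => X p.2 p.1) hX).comp
    (measurable_id.prodMk hM)

variable {P : Measure Ω} {T : ℕ → Ω → α}

theorem lintegral_prod_range_mul_of_iIndepFun (hT : iIndepFun T P)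
    (hTm : ∀ n, Measurable (T n)) (hident : ∀ n, IdentDistrib (T n) (T 0) P P)
    {a b : α → ℝ≥0∞} (ha : Measurable a) (hb : Measurable b) (n : ℕ) :
    ∫⁻ ω, (∏ i ∈ range n, a (T i ω)) * b (T n ω) ∂P =
      (∫⁻ ω, a (T 0 ω) ∂P) ^ n * ∫⁻ ω, b (T 0 ω) ∂P := by
  classical
  let g : ℕ → α → ℝ≥0∞ := fun i => if i = n then b else a
  have hg : ∀ i, Measurable (g i) := fun i => by dsimp only [g]; split_ifs <;> assumption
  have hga : ∀ i ∈ range n, g i = a := fun i hi => if_neg (mem_range.1 hi).ne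
  have hgb : g n = b := if_pos rfl
  have hlaw : ∀ i, ∫⁻ ω, g i (T i ω) ∂P = ∫⁻ ω, g i (T 0 ω) ∂P :=
    fun i => ((hident i).comp (hg i)).lintegral_eq
  calc ∫⁻ ω, (∏ i ∈ range n, a (T i ω)) * b (T n ω) ∂P
      = ∫⁻ ω, ∏ i ∈ range (n + 1), g i (T i ω) ∂P := lintegral_congr fun ω => by
        rw [prod_range_succ, hgb]
        exact congrArg (· * _) (prod_congr rfl fun i hi => by rw [hga i hi])
    _ = ∏ i ∈ range (n + 1), ∫⁻ ω, g i (T i ω) ∂P :=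
        lintegral_prod_eq_prod_lintegral_of_indepFun _ _ (hT.comp g hg)
          fun i => (hg i).comp (hTm i)
    _ = (∫⁻ ω, a (T 0 ω) ∂P) ^ n * ∫⁻ ω, b (T 0 ω) ∂P := by
        rw [prod_range_succ, prod_congr rfl fun i hi => by rw [hlaw, hga i hi], prod_const,
          card_range, hlaw, hgb]

theorem lintegral_prod_range_sInf_mul_of_iIndepFun (hT : iIndepFun T P)
    (hTm : ∀ n, Measurable (T n)) (hident : ∀ n, IdentDistrib (T n) (T 0) P P) {A : Set α}
    {a b : α → ℝ≥0∞} (ha : Measurable a) (hb : Measurable b) (haA : ∀ x ∈ A, a x = 0)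
    (hbA : ∀ x ∉ A, b x = 0) :
    ∫⁻ ω, (∏ i ∈ range (sInf {n | T n ω ∈ A}), a (T i ω)) * b (T (sInf {n | T n ω ∈ A}) ω) ∂P =
      (1 - ∫⁻ ω, a (T 0 ω) ∂P)⁻¹ * ∫⁻ ω, b (T 0 ω) ∂P := by
  simp_rw [← tsum_prod_range_mul_eq_sInf (fun n => haA _) (fun n => hbA _)]
  rw [lintegral_tsum fun n => by fun_prop]
  simp_rw [lintegral_prod_range_mul_of_iIndepFun hT hTm hident ha hb]
  rw [ENNReal.tsum_mul_right, ENNReal.tsum_geometric]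

theorem ae_exists_mem_of_iIndepFun (hT : iIndepFun T P)
    (hident : ∀ n, IdentDistrib (T n) (T 0) P P) {A : Set α} (hA : MeasurableSet A)
    (hA0 : P (T 0 ⁻¹' A) ≠ 0) : ∀ᵐ ω ∂P, ∃ n, T n ω ∈ A := by
  have := hT.isProbabilityMeasure
  have hlt : P (T 0 ⁻¹' Aᶜ) < 1 := by
    rw [preimage_compl,
      prob_compl_eq_one_sub₀ ((hident 0).aemeasurable_fst.nullMeasurableSet_preimage hA)]
    exact ENNReal.sub_lt_self ENNReal.one_ne_top one_ne_zero hA0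
  have hle : ∀ n, P {ω | ¬ ∃ m, T m ω ∈ A} ≤ P (T 0 ⁻¹' Aᶜ) ^ n := fun n => calc
    _ ≤ P (⋂ i ∈ range n, T i ⁻¹' Aᶜ) :=
        measure_mono fun ω (hω : ¬ ∃ m, T m ω ∈ A) => mem_iInter₂.2 fun i _ hi => hω ⟨i, hi⟩
    _ = ∏ i ∈ range n, P (T i ⁻¹' Aᶜ) := hT.measure_inter_preimage_eq_mul _ fun _ _ => hA.compl
    _ = _ := by
        rw [prod_congr rfl fun i _ => (hident i).measure_mem_eq hA.compl, prod_const, card_range]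
  exact le_antisymm (ge_of_tendsto' (ENNReal.tendsto_pow_atTop_nhds_zero_of_lt_one hlt) hle)
    bot_le

end FirstSuccess

section BusyPeriod

variable {κ : Type*}

-- `p = (τ, c, S)` is a cycle: interarrival time, then source and service time of the packet.
noncomputable def pushedOutWeight (s : ℝ) (p : ℝ × κ × ℝ) : ℝ≥0∞ :=
  if p.1 < p.2.2 then ENNReal.ofReal (exp (-s * p.1)) else 0

noncomputable def deliveredWeight [DecidableEq κ] (s : ℝ) (k : κ) (p : ℝ × κ × ℝ) : ℝ≥0∞ :=
  if p.2.2 ≤ p.1 then (if p.2.1 = k then ENNReal.ofReal (exp (-s * p.2.2)) else 0) else 0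

theorem measurable_pushedOutWeight [MeasurableSpace κ] (s : ℝ) :
    Measurable (pushedOutWeight (κ := κ) s) :=
  .ite (measurableSet_lt measurable_fst measurable_snd.snd) (by fun_prop) measurable_const

theorem measurable_deliveredWeight [MeasurableSpace κ] [MeasurableSingletonClass κ]
    [DecidableEq κ] (s : ℝ) (k : κ) : Measurable (deliveredWeight s k) :=
  .ite (measurableSet_le measurable_snd.snd measurable_fst)
    (.ite (measurable_snd.fst (measurableSet_singleton k))
      (measurable_snd.snd.const_mul (-s)).exp.ennreal_ofReal measurable_const)
    measurable_const

theorem prod_pushedOutWeight_mul_deliveredWeight [DecidableEq κ] {p : ℕ → ℝ × κ × ℝ} {m : ℕ}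
    (hm : (p m).2.2 ≤ (p m).1) (hlt : ∀ i < m, (p i).1 < (p i).2.2) (s : ℝ) (k : κ) :
    (∏ i ∈ range m, pushedOutWeight s (p i)) * deliveredWeight s k (p m) =
      if (p m).2.1 = k then
        ENNReal.ofReal (exp (-s * (∑ i ∈ range m, (p i).1 + (p m).2.2))) else 0 := by
  have hpush : ∀ i ∈ range m, pushedOutWeight s (p i) = ENNReal.ofReal (exp (-s * (p i).1)) :=
    fun i hi => if_pos (hlt i (mem_range.1 hi))
  rw [prod_congr rfl hpush]
  simp only [deliveredWeight, if_pos hm]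
  split_ifs
  · rw [← ENNReal.ofReal_prod_of_nonneg fun _ _ => (exp_pos _).le,
      ← ENNReal.ofReal_mul (prod_nonneg fun _ _ => (exp_pos _).le), ← exp_sum, ← exp_add,
      mul_add, mul_sum]
  · rw [mul_zero]

variable {Ω : Type*} [MeasurableSpace Ω] {P : Measure Ω} [MeasurableSpace κ]
  [MeasurableSingletonClass κ] [DecidableEq κ]

theorem lintegral_deliveredWeight [IsProbabilityMeasure P] {l : ℝ} (hl : 0 < l) {τ S : Ω → ℝ}
    {c : Ω → κ} (hτ : HasLaw τ (expMeasure l) P) (hc : Measurable c) (hS : Measurable S)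
    (hS0 : ∀ ω, 0 ≤ S ω) (hmark : τ ⟂ᵢ[P] fun ω => (c ω, S ω)) {s : ℝ} (hsl : 0 ≤ s + l)
    (k : κ) :
    ∫⁻ ω, deliveredWeight s k (τ ω, c ω, S ω) ∂P =
      ENNReal.ofReal (∫ ω in {ω | c ω = k}, exp (-(s + l) * S ω) ∂P) := by
  refine (lintegral_ite_le_of_indepFun hl hτ (hc.prodMk hS) hmark measurable_snd hS0
    (w := fun v => if v.1 = k then ENNReal.ofReal (exp (-s * v.2)) else 0)
    (.ite (measurable_fst (measurableSet_singleton k))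
      (measurable_snd.const_mul (-s)).exp.ennreal_ofReal measurable_const)).trans ?_
  rw [ofReal_integral_eq_lintegral_ofReal (integrable_exp_neg_mul hS hS0 hsl).integrableOn
      (ae_of_all _ fun _ => (exp_pos _).le),
    ← lintegral_indicator (s := {ω | c ω = k}) (hc (measurableSet_singleton k))]
  refine lintegral_congr fun ω => ?_
  by_cases hck : c ω = k
  · simp only [indicator, hck, Set.mem_ofPred_eq, if_true]
    rw [← ENNReal.ofReal_mul (exp_pos _).le, ← exp_add]
    ring_nf
  · simp [indicator, hck]

variable {τ S : ℕ → Ω → ℝ} {c : ℕ → Ω → κ} {M : Ω → ℕ} {B : Ω → ℝ}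

theorem setIntegral_exp_busyPeriod_eq_toReal_lintegral (hτm : ∀ n, Measurable (τ n))
    (hSm : ∀ n, Measurable (S n)) (hcm : ∀ n, Measurable (c n))
    (hM : ∀ ω, M ω = sInf {n | S n ω ≤ τ n ω})
    (hB : ∀ ω, B ω = ∑ i ∈ range (M ω), τ i ω + S (M ω) ω)
    (hsucc : ∀ᵐ ω ∂P, ∃ n, S n ω ≤ τ n ω) (s : ℝ) (k : κ) :
    ∫ ω in {ω | c (M ω) ω = k}, exp (-s * B ω) ∂P =
      (∫⁻ ω, (∏ i ∈ range (M ω), pushedOutWeight s (τ i ω, c i ω, S i ω)) *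
        deliveredWeight s k (τ (M ω) ω, c (M ω) ω, S (M ω) ω) ∂P).toReal := by
  have hMm : Measurable M := by
    rw [show M = _ from funext hM]
    exact measurable_sInf_setOf fun n => measurableSet_le (hSm n) (hτm n)
  have hBm : Measurable B := by
    rw [show B = _ from funext hB]
    exact Measurable.apply_of_measurable_index
      (X := fun n ω => ∑ i ∈ range n, τ i ω + S n ω) (fun n => by fun_prop) hMm
  rw [integral_eq_lintegral_of_nonneg_ae (ae_of_all _ fun _ => (exp_pos _).le)
      (by fun_prop : Measurable fun ω => exp (-s * B ω)).aestronglyMeasurable,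
    ← lintegral_indicator (s := {ω | c (M ω) ω = k})
      (Measurable.apply_of_measurable_index hcm hMm (measurableSet_singleton k))]
  congr 1
  refine lintegral_congr_ae (hsucc.mono fun ω hω => ?_)
  obtain ⟨hMsucc, hMmin⟩ : S (M ω) ω ≤ τ (M ω) ω ∧ ∀ i < M ω, τ i ω < S i ω := by
    rw [hM]; exact ⟨Nat.sInf_mem hω, fun i hi => not_le.1 (Nat.notMem_of_lt_sInf hi)⟩
  dsimp only
  rw [prod_pushedOutWeight_mul_deliveredWeight (p := fun n => (τ n ω, c n ω, S n ω)) hMsucc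
    hMmin, ← hB ω]
  simp [indicator]

theorem setIntegral_exp_busyPeriod_eq [IsProbabilityMeasure P] {l : ℝ} (hl : 0 < l)
    (hτm : ∀ n, Measurable (τ n)) (hSm : ∀ n, Measurable (S n)) (hcm : ∀ n, Measurable (c n))
    (hS0 : ∀ n ω, 0 ≤ S n ω) (hτ : HasLaw (τ 0) (expMeasure l) P)
    (hmark : τ 0 ⟂ᵢ[P] fun ω => (c 0 ω, S 0 ω))
    (hindep : iIndepFun (fun n ω => (τ n ω, c n ω, S n ω)) P)
    (hident : ∀ n, IdentDistrib (fun ω => (τ n ω, c n ω, S n ω))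
      (fun ω => (τ 0 ω, c 0 ω, S 0 ω)) P P)
    (hM : ∀ ω, M ω = sInf {n | S n ω ≤ τ n ω})
    (hB : ∀ ω, B ω = ∑ i ∈ range (M ω), τ i ω + S (M ω) ω) {s : ℝ} (hs : 0 ≤ s) (k : κ) :
    ∫ ω in {ω | c (M ω) ω = k}, exp (-s * B ω) ∂P =
      (∫ ω in {ω | c 0 ω = k}, exp (-(s + l) * S 0 ω) ∂P) /
        (1 - l / (s + l) * (1 - ∫ ω, exp (-(s + l) * S 0 ω) ∂P)) := by
  set T : ℕ → Ω → ℝ × κ × ℝ := fun n ω => (τ n ω, c n ω, S n ω)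
  have hTm : ∀ n, Measurable (T n) := fun n => (hτm n).prodMk ((hcm n).prodMk (hSm n))
  have hsl : 0 < s + l := by linarith
  have hτS : τ 0 ⟂ᵢ[P] S 0 := hmark.comp measurable_id measurable_snd
  have hsucc : ∀ᵐ ω ∂P, ∃ n, T n ω ∈ {p : ℝ × κ × ℝ | p.2.2 ≤ p.1} :=
    ae_exists_mem_of_iIndepFun hindep hident (measurableSet_le (by fun_prop) (by fun_prop))
      (measure_le_ne_zero_of_indepFun hl hτ (hSm 0) (hS0 0) hτS)
  have hMT : ∀ ω, M ω = sInf {n | T n ω ∈ {p : ℝ × κ × ℝ | p.2.2 ≤ p.1}} := hM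
  have hr : ∫⁻ ω, pushedOutWeight s (T 0 ω) ∂P =
      ENNReal.ofReal (l / (s + l) * (1 - ∫ ω, exp (-(s + l) * S 0 ω) ∂P)) :=
    lintegral_ite_lt_exp_of_indepFun hl hτ (hSm 0) (hS0 0) hτS hsl
  have hq : ∫⁻ ω, deliveredWeight s k (T 0 ω) ∂P =
      ENNReal.ofReal (∫ ω in {ω | c 0 ω = k}, exp (-(s + l) * S 0 ω) ∂P) :=
    lintegral_deliveredWeight hl hτ (hcm 0) (hSm 0) (hS0 0) hmark hsl.le k
  rw [setIntegral_exp_busyPeriod_eq_toReal_lintegral hτm hSm hcm hM hB hsucc s k]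
  simp only [hMT]
  refine (congrArg ENNReal.toReal (lintegral_prod_range_sInf_mul_of_iIndepFun hindep hTm hident
    (measurable_pushedOutWeight s) (measurable_deliveredWeight s k)
    (fun p hp => if_neg (not_lt.2 hp)) (fun p hp => if_neg hp))).trans ?_
  rw [hr, hq]
  set L := ∫ ω, exp (-(s + l) * S 0 ω) ∂P
  have hL0 : 0 ≤ L := integral_nonneg fun _ => (exp_pos _).le
  have hL1 : L ≤ 1 := by
    calc L ≤ ∫ ω, (1 : ℝ) ∂P := integral_mono (integrable_exp_neg_mul (hSm 0) (hS0 0) hsl.le)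
          (integrable_const 1) fun ω => exp_le_one_iff.2 (by nlinarith [hS0 0 ω])
      _ = 1 := by simp
  have hr1 : l / (s + l) * (1 - L) ≤ 1 :=
    mul_le_one₀ ((div_le_one hsl).2 (by linarith)) (by linarith) (by linarith)
  rw [ENNReal.toReal_mul, ENNReal.toReal_inv, ENNReal.toReal_sub_of_le
      (ENNReal.ofReal_le_one.2 hr1) ENNReal.one_ne_top, ENNReal.toReal_one,
    ENNReal.toReal_ofReal (by positivity), ENNReal.toReal_ofReal
      (setIntegral_nonneg (s := {ω | c 0 ω = k}) (hcm 0 (measurableSet_singleton k))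
        fun _ _ => (exp_pos _).le),
    inv_mul_eq_div]

end BusyPeriod

theorem busy_period_transform_multisource_general {Ω : Type*} [MeasurableSpace Ω]
    (P : Measure Ω) [IsProbabilityMeasure P] (K : ℕ)
    (lam : Fin K → ℝ) (hlam : ∀ k, 0 < lam k)
    (τ S : ℕ → Ω → ℝ) (c : ℕ → Ω → Fin K)
    (hτmeas : ∀ n, Measurable (τ n)) (hSmeas : ∀ n, Measurable (S n))
    (hcmeas : ∀ n, Measurable (c n)) (hSnn : ∀ n ω, 0 ≤ S n ω)
    (hτexp : ∀ n, ∀ t : ℝ, 0 ≤ t →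
      (P {ω | t < τ n ω}).toReal = Real.exp (-(∑ j, lam j) * t))
    (hmarkindep : ∀ n, IndepFun (τ n) (fun ω => (c n ω, S n ω)) P)
    (LS : Fin K → ℝ → ℝ)
    (hLS : ∀ n, ∀ k : Fin K, ∀ s : ℝ,
      ∫ ω in {ω | c n ω = k}, Real.exp (-s * S n ω) ∂P =
        (lam k / ∑ j, lam j) * LS k s)
    (hindep : iIndepFun
      (fun n ω => (τ n ω, c n ω, S n ω)) P)
    (hident : ∀ n, IdentDistrib (fun ω => (τ n ω, c n ω, S n ω))
      (fun ω => (τ 0 ω, c 0 ω, S 0 ω)) P P)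
    (M : Ω → ℕ) (hM : ∀ ω, M ω = sInf {n | S n ω ≤ τ n ω})
    (B : Ω → ℝ) (hB : ∀ ω, B ω = (∑ i ∈ Finset.range (M ω), τ i ω) + S (M ω) ω) :
    ∀ s : ℝ, 0 ≤ s → ∀ k : Fin K,
      ∫ ω in {ω | c (M ω) ω = k}, Real.exp (-s * B ω) ∂P =
        (lam k / ∑ j, lam j) * LS k (s + ∑ j, lam j) * (s + ∑ j, lam j) /
          (s + (∑ j, lam j) *
            ((∑ j, lam j)⁻¹ * ∑ j, lam j * LS j (s + ∑ j, lam j))) := by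
  intro s hs k
  set l := ∑ j, lam j
  have hl : 0 < l := sum_pos (fun j _ => hlam j) ⟨k, mem_univ k⟩
  have hint := integrable_exp_neg_mul (P := P) (hSmeas 0) (hSnn 0) (a := s + l) (by positivity)
  have hL : ∫ ω, exp (-(s + l) * S 0 ω) ∂P = l⁻¹ * ∑ j, lam j * LS j (s + l) := by
    rw [integral_eq_sum_setIntegral_fiber (hcmeas 0) hint, mul_sum]
    exact sum_congr rfl fun j _ => by rw [hLS 0 j]; ring
  have hL0 : 0 < ∫ ω, exp (-(s + l) * S 0 ω) ∂P := integral_exp_pos hint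
  rw [setIntegral_exp_busyPeriod_eq hl hτmeas hSmeas hcmeas hSnn
    (hasLaw_expMeasure_of_measureReal_lt (hτmeas 0) hl (hτexp 0)) (hmarkindep 0) hindep hident
    hM hB hs k, hLS 0 k, ← hL]
  field_simp
  ring

/-- In the K-source M/G/1/1 pushout server: `(τ_n, c_n, S_n)` are i.i.d. triples, `τ_n`
exponential with rate `λ = λ_1 + ⋯ + λ_K` and independent of `(c_n, S_n)`,
`P(c_n = k) = λ_k/λ`, and `L_{S,k}` is the conditional Laplace transform of `S_n` given
`c_n = k` (so that `E[exp(−s·S_n)·1{c_n = k}] = (λ_k/λ)·L_{S,k}(s)`).  With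
`M = inf {n | S_n ≤ τ_n}` and `B = Σ_{i<M} τ_i + S_M`, for every `s ≥ 0` and every `k`,
`E[exp(−s·B)·1{c_M = k}] = (λ_k/λ)·L_{S,k}(s+λ)·(s+λ)/(s + λ·L_S(s+λ))`, where
`L_S(u) = (1/λ)·Σ_j λ_j·L_{S,j}(u)`. -/
theorem busy_period_transform_multisource {Ω : Type*} [MeasurableSpace Ω]
    (P : Measure Ω) [IsProbabilityMeasure P] (K : ℕ)
    (lam : Fin K → ℝ) (hlam : ∀ k, 0 < lam k)
    (τ S : ℕ → Ω → ℝ) (c : ℕ → Ω → Fin K)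
    (hτmeas : ∀ n, Measurable (τ n)) (hSmeas : ∀ n, Measurable (S n))
    (hcmeas : ∀ n, Measurable (c n)) (hSnn : ∀ n ω, 0 ≤ S n ω)
    (hτexp : ∀ n, ∀ t : ℝ, 0 ≤ t →
      (P {ω | t < τ n ω}).toReal = Real.exp (-(∑ j, lam j) * t))
    (hmarkindep : ∀ n, IndepFun (τ n) (fun ω => (c n ω, S n ω)) P)
    (hcprob : ∀ n, ∀ k : Fin K, (P {ω | c n ω = k}).toReal = lam k / ∑ j, lam j)
    (LS : Fin K → ℝ → ℝ)
    (hLS : ∀ n, ∀ k : Fin K, ∀ s : ℝ,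
      ∫ ω in {ω | c n ω = k}, Real.exp (-s * S n ω) ∂P =
        (lam k / ∑ j, lam j) * LS k s)
    (hindep : iIndepFun
      (fun n ω => (τ n ω, c n ω, S n ω)) P)
    (hident : ∀ n, IdentDistrib (fun ω => (τ n ω, c n ω, S n ω))
      (fun ω => (τ 0 ω, c 0 ω, S 0 ω)) P P)
    (M : Ω → ℕ) (hM : ∀ ω, M ω = sInf {n | S n ω ≤ τ n ω})
    (B : Ω → ℝ) (hB : ∀ ω, B ω = (∑ i ∈ Finset.range (M ω), τ i ω) + S (M ω) ω) :
    ∀ s : ℝ, 0 ≤ s → ∀ k : Fin K,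
      ∫ ω in {ω | c (M ω) ω = k}, Real.exp (-s * B ω) ∂P =
        (lam k / ∑ j, lam j) * LS k (s + ∑ j, lam j) * (s + ∑ j, lam j) /
          (s + (∑ j, lam j) *
            ((∑ j, lam j)⁻¹ * ∑ j, lam j * LS j (s + ∑ j, lam j))) :=
  busy_period_transform_multisource_general P K lam hlam τ S c hτmeas hSmeas hcmeas hSnn hτexp
    hmarkindep LS hLS hindep hident M hM B hB
end
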